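/- arXiv:2005.04252 — 3 statements merged into one kernel-verified Lean document; each statement's English description precedes it below -/
import Mathlib

section
/- Let M be a matroid on a finite ground set E and let ℓ : E → ℝ be generic. Enumerate the bases of M as B₁, …, Bₙ so that ℓ(B₁) > ℓ(B₂) > … > ℓ(Bₙ) (strictly decreasing ℓ-weight). Then this enumeration is a shelling order of the independence complex I(M). In particular, every ℓ-weight shelling order of I(M) is reversible. (Chari's reversibility result, recovered in Section 4.) -/
/-!
If `i < j` then `B i` is heavier than `B j`, and the exchange axiom produces a single
exchange `B j - e + f` that is still heavier than `B j` and removes some `e ∉ B i`.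
That base comes before `B j`, and its intersection with `B j` is the facet `B j - e`,
which contains `B i ∩ B j`.

An improving exchange exists as soon as some base `B'` outweighs `B`: exchange the lightest
element `f₀` of `B' \ B` against some `g ∈ B \ B'`. If `ℓ g < ℓ f₀`, exchanging `g` out of `B`
already gains weight; otherwise `B' - f₀ + g` is a heavier base closer to `B`, and we recurse.
-/

open scoped BigOperators

/-- The `ℓ`-weight of a set `A ⊆ E`. -/
noncomputable def wt {α : Type*} (ℓ : α → ℝ) (A : Set α) : ℝ := ∑ᶠ e ∈ A, ℓ e

/-- `ℓ` is generic for `M`. -/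
def Generic {α : Type*} (M : Matroid α) (ℓ : α → ℝ) : Prop :=
  Function.Injective ℓ ∧
    ∀ ⦃B B' : Set α⦄, M.IsBase B → M.IsBase B' → B ≠ B' → wt ℓ B ≠ wt ℓ B'

/-- `F 0, …, F (n-1)` is a shelling order. -/
def IsShelling {α : Type*} {n : ℕ} (F : Fin n → Set α) : Prop :=
  ∀ i j : Fin n, i < j → ∃ k : Fin n, k < j ∧ F i ∩ F j ⊆ F k ∩ F j ∧
    (F k ∩ F j).ncard = (F j).ncard - 1

/-- `B` enumerates (without repetition) all the bases of `M`. -/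
def EnumeratesBases {α : Type*} (M : Matroid α) {n : ℕ} (B : Fin n → Set α) : Prop :=
  Function.Injective B ∧ (∀ i, M.IsBase (B i)) ∧ ∀ C, M.IsBase C → ∃ i, B i = C

open Set

lemma wt_insert_sdiff_singleton {α : Type*} (ℓ : α → ℝ) {A : Set α} {e f : α}
    (hA : A.Finite) (he : e ∈ A) (hf : f ∉ A) :
    wt ℓ (insert f (A \ {e})) = wt ℓ A - ℓ e + ℓ f := by
  have hA' : wt ℓ A = ℓ e + wt ℓ (A \ {e}) := by
    conv_lhs => rw [← insert_sdiff_self_of_mem he]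
    exact finsum_mem_insert ℓ (fun h ↦ h.2 rfl) hA.sdiff
  rw [wt, finsum_mem_insert ℓ (fun h ↦ hf h.1) hA.sdiff, ← wt, hA']
  ring

lemma insert_sdiff_singleton_inter_self {α : Type*} {A : Set α} {e f : α} (hf : f ∉ A) :
    insert f (A \ {e}) ∩ A = A \ {e} := by
  rw [insert_inter_of_notMem hf, inter_eq_left.mpr sdiff_subset]

namespace Matroid

variable {α : Type*} {M : Matroid α} [M.RankFinite] {ℓ : α → ℝ}

theorem IsBase.exists_improving_exchange {B B' : Set α} (hB : M.IsBase B) (hB' : M.IsBase B')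
    (hlt : wt ℓ B < wt ℓ B') :
    ∃ e ∈ B \ B', ∃ f ∉ B, ℓ e < ℓ f ∧ M.IsBase (insert f (B \ {e})) := by
  induction hm : (B' \ B).ncard using Nat.strong_induction_on generalizing B' with
  | _ m ih =>
  obtain ⟨f₀, hf₀, hf₀_min⟩ : ∃ f₀ ∈ B' \ B, ∀ f ∈ B' \ B, ℓ f₀ ≤ ℓ f := by
    refine exists_min_image _ ℓ hB'.finite.sdiff (nonempty_of_not_subset fun hB'B ↦ ?_)
    exact hlt.ne (congrArg (wt ℓ) (hB'.eq_of_subset_isBase hB hB'B).symm)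
  obtain ⟨g, hg, hB''⟩ := hB'.exchange hB hf₀
  rcases lt_or_ge (ℓ g) (ℓ f₀) with hg_lt | hg_ge
  · obtain ⟨f, hf, hBf⟩ := hB.exchange hB' hg
    exact ⟨g, hg, f, hf.2, hg_lt.trans_le (hf₀_min f hf), hBf⟩
  · have hlt'' : wt ℓ B < wt ℓ (insert g (B' \ {f₀})) := by
      rw [wt_insert_sdiff_singleton ℓ hB'.finite hf₀.1 hg.2]
      linarith
    have hcard : (insert g (B' \ {f₀}) \ B).ncard < m := by
      rw [insert_sdiff_of_mem _ hg.1, sdiff_sdiff_comm, ← hm]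
      exact ncard_sdiff_singleton_lt_of_mem hf₀ hB'.finite.sdiff
    obtain ⟨e, he, f, hf, hef, hBf⟩ := ih _ hcard hB'' hlt'' rfl
    refine ⟨e, ⟨he.1, fun heB' ↦ he.2 (mem_insert_of_mem _ ⟨heB', ?_⟩)⟩, f, hf, hef, hBf⟩
    rintro rfl
    exact hf₀.2 he.1

end Matroid

theorem decreasing_weight_order_is_shelling_general {α : Type*} [Fintype α]
    (M : Matroid α)
    (ℓ : α → ℝ)
    {n : ℕ} (B : Fin n → Set α) (hB : EnumeratesBases M B)
    (hsort : ∀ i j : Fin n, i < j → wt ℓ (B j) < wt ℓ (B i)) :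
    IsShelling B := by
  obtain ⟨-, hB_base, hB_surj⟩ := hB
  have hanti : StrictAnti (fun i ↦ wt ℓ (B i)) := hsort
  intro i j hij
  obtain ⟨e, he, f, hf, hef, hBf⟩ :=
    (hB_base j).exists_improving_exchange (hB_base i) (hsort i j hij)
  obtain ⟨k, hk⟩ := hB_surj _ hBf
  have hkj : k < j := hanti.lt_iff_gt.mp <| by
    rw [hk, wt_insert_sdiff_singleton ℓ (toFinite _) he.1 hf]
    linarith
  have hinter : B k ∩ B j = B j \ {e} := hk ▸ insert_sdiff_singleton_inter_self hf
  refine ⟨k, hkj, ?_, ?_⟩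
  · rw [hinter]
    exact fun x hx ↦ ⟨hx.2, fun hxe ↦ he.2 (hxe ▸ hx.1)⟩
  · rw [hinter, ncard_sdiff_singleton_of_mem he.1]

theorem decreasing_weight_order_is_shelling {α : Type*} [Fintype α]
    (M : Matroid α) (hE : M.E = Set.univ)
    (ℓ : α → ℝ) (hgen : Generic M ℓ)
    {n : ℕ} (B : Fin n → Set α) (hB : EnumeratesBases M B)
    (hsort : ∀ i j : Fin n, i < j → wt ℓ (B j) < wt ℓ (B i)) :
    IsShelling B :=
  decreasing_weight_order_is_shelling_general M ℓ B hB hsort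
end

section
/- Let M be a matroid of rank r on a finite ground set E and let B₁, …, Bₙ be a pinned broken line shelling of the bases of M with first basis B := B₁. Let I be an independent set of M with I ∩ B = ∅ and let j ≥ 0. Then the number of bases B' of M satisfying B' \ B = I and |R(B')| = |I| + j equals h_j((M/I)|_B), the j-th h-number of the matroid obtained from M by contracting I and then restricting to the ground set B. (Lemma of Section 7: pinned broken line shellings witness the h-vector decomposition of Klee–Samper.) -/
/-!
STATEMENT 13 (Lemma of Section 7): for a pinned broken line shelling of a rank
`r` matroid `M` with first basis `B`, and an independent set `I` disjoint from
`B`, the number of bases `B'` with `B' \ B = I` and `|R(B')| = |I| + j` equals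
the `j`-th `h`-number of `(M/I)|_B` (contraction of `I`, restricted to `B`).

Since `I` is independent and disjoint from `B`, a set `S ⊆ B` is independent in
`(M/I)|_B` iff `S ∪ I` is independent in `M`; the `f`- and `h`-numbers of
`(M/I)|_B` are expressed accordingly, with `rank (M/I)|_B = r - |I|`.
-/

open scoped BigOperators

/-- The restriction set of the facet `F j` in the enumeration `F`. -/
def restrictionSet {α : Type*} {n : ℕ} (F : Fin n → Set α) (j : Fin n) : Set α :=
  {x | x ∈ F j ∧ ∃ i : Fin n, i < j ∧ F j \ {x} ⊆ F i}

/-- `f_{k-1}((M/I)|_B)`: the number of independent sets of cardinality `k` of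
the matroid obtained from `M` by contracting the independent set `I` (disjoint
from `B`) and restricting to `B`; these are the `S ⊆ B` with `S ∪ I`
independent in `M`. -/
noncomputable def fNumCR {α : Type*} (M : Matroid α) (I Bs : Set α) (k : ℕ) : ℕ :=
  {S : Set α | S ⊆ Bs ∧ M.Indep (S ∪ I) ∧ S.ncard = k}.ncard

/-- The `j`-th `h`-number of `(M/I)|_B`, where `d` is its rank:
`h_j = Σ_{k=0}^{j} (−1)^{j−k} binom(d−k, j−k) f_{k−1}`. -/
noncomputable def hNumCR {α : Type*} (M : Matroid α) (I Bs : Set α) (d j : ℕ) : ℤ :=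
  ∑ k ∈ Finset.range (j + 1),
    (-1 : ℤ) ^ (j - k) * (Nat.choose (d - k) (j - k)) * (fNumCR M I Bs k : ℤ)

/-!
A broken line shelling is a shelling whose restriction sets partition the independence complex
into the boolean intervals `[R(Bᵢ), Bᵢ]`: if a face `G ⊆ Bᵢ` lies in an earlier basis, take the
`ℓᵢ`-lightest basis `C ⊇ G` and a symmetric exchange `e ∈ Bᵢ \ C`, `f ∈ C \ Bᵢ`; minimality of `C`
forces `ℓᵢ f < ℓᵢ e`, so `Bᵢ - e + f` precedes `Bᵢ` and `e ∈ R(Bᵢ) \ G`. Pinnedness puts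
`Bᵢ \ B` inside `R(Bᵢ)`, so the faces `T ⊆ B` with `T ∪ I` independent are partitioned by the
intervals `[R(Bᵢ) ∩ B, Bᵢ ∩ B]` of the bases with `Bᵢ \ B = I`. An interval `[R, S]` with
`|S| = d` contributes `t ^ |R|` to `∑ hⱼ tʲ`, which gives the count.
-/

open Set

section Counting

lemma ncard_sep_Icc_ncard_eq {α : Type*} {R S : Set α} (hS : S.Finite) (hRS : R ⊆ S) (k : ℕ) :
    {T ∈ Icc R S | T.ncard = k}.ncard
      = if R.ncard ≤ k then (S.ncard - R.ncard).choose (k - R.ncard) else 0 := by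
  have hR : R.Finite := hS.subset hRS
  split_ifs with hk
  · have himage : {T ∈ Icc R S | T.ncard = k}
        = (· ∪ R) '' {U ⊆ S \ R | U.ncard = k - R.ncard} := by
      ext T
      constructor
      · rintro ⟨⟨hRT, hTS⟩, rfl⟩
        exact ⟨T \ R, ⟨sdiff_subset_sdiff_left hTS, ncard_sdiff hRT hR⟩, sdiff_union_of_subset hRT⟩
      · rintro ⟨U, ⟨hU, hUk⟩, rfl⟩
        have hdisj : Disjoint U R := disjoint_of_subset_left hU disjoint_sdiff_left
        refine ⟨⟨subset_union_right, union_subset (hU.trans sdiff_subset) hRS⟩, ?_⟩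
        rw [ncard_union_eq hdisj (hS.sdiff.subset hU) hR, hUk]
        omega
    have hinj : InjOn (· ∪ R) {U ⊆ S \ R | U.ncard = k - R.ncard} := by
      intro U₁ h₁ U₂ h₂ h
      simpa [union_sdiff_right, (disjoint_of_subset_left h₁.1 disjoint_sdiff_left).sdiff_eq_left,
        (disjoint_of_subset_left h₂.1 disjoint_sdiff_left).sdiff_eq_left]
        using congrArg (· \ R) h
    rw [himage, hinj.ncard_image, ncard_powerset_ncard hS.sdiff, ncard_sdiff hRS hR]
  · convert ncard_empty (Set α)
    refine eq_empty_of_forall_notMem fun T ⟨⟨hRT, hTS⟩, hTk⟩ => hk ?_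
    exact hTk ▸ ncard_le_ncard hRT (hS.subset hTS)

lemma sum_range_neg_one_pow_mul_choose_sub_mul_choose (D J : ℕ) :
    ∑ m ∈ Finset.range (J + 1), (-1 : ℤ) ^ (J - m) * ((D - m).choose (J - m) : ℤ) * D.choose m
      = if J = 0 then 1 else 0 := by
  have hterm : ∀ m ∈ Finset.range (J + 1), (-1 : ℤ) ^ (J - m) * ((D - m).choose (J - m) : ℤ) *
      D.choose m = (-1) ^ J * D.choose J * ((-1) ^ m * J.choose m) := by
    intro m hm
    have hmJ : m ≤ J := Finset.mem_range_succ_iff.1 hm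
    have hsign : (-1 : ℤ) ^ J = (-1) ^ (J - m) * (-1) ^ m := by
      rw [← pow_add, Nat.sub_add_cancel hmJ]
    have hchoose : (D.choose J * J.choose m : ℤ) = D.choose m * (D - m).choose (J - m) := by
      exact_mod_cast Nat.choose_mul hmJ
    have hsq : (-1 : ℤ) ^ m * (-1) ^ m = 1 := by rw [← mul_pow]; simp
    rw [hsign]
    linear_combination (-(-1) ^ (J - m) * ((D - m).choose (J - m) : ℤ) * D.choose m) * hsq
      - (-1) ^ (J - m) * (-1) ^ m * (-1) ^ m * hchoose
  rw [Finset.sum_congr rfl hterm, ← Finset.mul_sum, Int.alternating_sum_range_choose]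
  split_ifs with hJ <;> simp [hJ]

/-- The `h`-vector of the interval `[R, S]`, `|R| = a`, `|S| = d`, is the indicator of `a`. -/
lemma sum_range_neg_one_pow_mul_choose_mul_ite_choose {a d : ℕ} (j : ℕ) :
    ∑ k ∈ Finset.range (j + 1), (-1 : ℤ) ^ (j - k) * ((d - k).choose (j - k) : ℤ) *
        ((if a ≤ k then (d - a).choose (k - a) else 0 : ℕ) : ℤ)
      = if a = j then 1 else 0 := by
  rcases lt_or_ge j a with hja | haj
  · rw [if_neg hja.ne', Finset.sum_eq_zero fun k hk => ?_]
    rw [if_neg (by grind), Nat.cast_zero, mul_zero]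
  obtain ⟨J, rfl⟩ := Nat.exists_eq_add_of_le haj
  rw [add_assoc, Finset.sum_range_add, Finset.sum_eq_zero fun k hk => ?_, zero_add]
  · simp only [le_add_iff_nonneg_right, zero_le, if_true, Nat.add_sub_cancel_left, Nat.sub_add_eq]
    rw [sum_range_neg_one_pow_mul_choose_sub_mul_choose]
    simp
  · rw [if_neg (by grind), Nat.cast_zero, mul_zero]

def hNumber (f : ℕ → ℕ) (d j : ℕ) : ℤ :=
  ∑ k ∈ Finset.range (j + 1), (-1 : ℤ) ^ (j - k) * ((d - k).choose (j - k) : ℤ) * f k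

theorem hNumber_ncard_eq_ncard_of_partition_Icc {α κ : Type*} [Finite α]
    {𝓕 : Set (Set α)} {ι : Set κ} (hι : ι.Finite) {R S : κ → Set α} {d : ℕ}
    (hRS : ∀ i ∈ ι, R i ⊆ S i) (hS : ∀ i ∈ ι, (S i).ncard = d)
    (hIcc : ∀ i ∈ ι, Icc (R i) (S i) ⊆ 𝓕) (hpart : ∀ T ∈ 𝓕, ∃! i, i ∈ ι ∧ T ∈ Icc (R i) (S i))
    (j : ℕ) :
    hNumber (fun k => {T ∈ 𝓕 | T.ncard = k}.ncard) d j = {i ∈ ι | (R i).ncard = j}.ncard := by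
  lift ι to Finset κ using hι
  have hdisj : (ι : Set κ).PairwiseDisjoint fun i => Icc (R i) (S i) :=
    fun i hi i' hi' hne => disjoint_left.2 fun T hT hT' =>
      hne ((hpart T (hIcc i hi hT)).unique ⟨hi, hT⟩ ⟨hi', hT'⟩)
  have hf : ∀ k, {T ∈ 𝓕 | T.ncard = k}.ncard = ∑ i ∈ ι,
      if (R i).ncard ≤ k then (d - (R i).ncard).choose (k - (R i).ncard) else 0 := by
    intro k
    have hunion : {T ∈ 𝓕 | T.ncard = k}
        = ⋃ i ∈ (ι : Set κ), {T ∈ Icc (R i) (S i) | T.ncard = k} := by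
      ext T
      simp only [mem_sep_iff, mem_iUnion₂]
      exact ⟨fun ⟨hT, hk⟩ => (hpart T hT).exists.imp fun i hi => ⟨hi.1, hi.2, hk⟩,
        fun ⟨i, hi, hT, hk⟩ => ⟨hIcc i hi hT, hk⟩⟩
    rw [hunion, ι.finite_toSet.ncard_biUnion (fun _ _ => toFinite _)
      (hdisj.mono fun i => sep_subset _ _), finsum_mem_coe_finset]
    refine Finset.sum_congr rfl fun i hi => ?_
    rw [← hS i hi]
    exact ncard_sep_Icc_ncard_eq (toFinite _) (hRS i hi) k
  simp only [hNumber, hf, Nat.cast_sum, Finset.mul_sum]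
  rw [Finset.sum_comm,
    show {i ∈ (ι : Set κ) | (R i).ncard = j} = ↑{i ∈ ι | (R i).ncard = j} by simp,
    ncard_coe_finset, Finset.natCast_card_filter]
  exact Finset.sum_congr rfl fun i _ => sum_range_neg_one_pow_mul_choose_mul_ite_choose j

lemma subset_union_subset_iff_sdiff_eq_and_mem_Icc {α : Type*} {X Y Z T I : Set α} (hYX : Y ⊆ X)
    (hXZY : X \ Z ⊆ Y) (hTZ : T ⊆ Z) (hIZ : Disjoint I Z) :
    (Y ⊆ T ∪ I ∧ T ∪ I ⊆ X) ↔ (X \ Z = I ∧ T ∈ Icc (Y ∩ Z) (X ∩ Z)) := by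
  simp only [subset_def, Set.ext_iff, mem_Icc, mem_union, mem_inter_iff, mem_sdiff,
    disjoint_left] at *
  grind

lemma ncard_eq_ncard_sdiff_add_ncard_inter {α : Type*} {X Y Z : Set α} (hY : Y.Finite)
    (hYX : Y ⊆ X) (hXZY : X \ Z ⊆ Y) : Y.ncard = (X \ Z).ncard + (Y ∩ Z).ncard := by
  rw [← ncard_inter_add_ncard_sdiff_eq_ncard Y Z hY, add_comm,
    (sdiff_subset_sdiff_left hYX).antisymm (subset_sdiff.2 ⟨hXZY, disjoint_sdiff_left⟩)]

end Counting

namespace Matroid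

variable {α : Type*} {M : Matroid α} {A C : Set α} {e : α}

/-- `f` is a second element of the intersection of the fundamental circuit of `e` in `C` with
the fundamental cocircuit of `e` in `A`, which is never `{e}`. -/
lemma IsBase.exists_symm_exchange (hA : M.IsBase A) (hC : M.IsBase C) (he : e ∈ A \ C) :
    ∃ f ∈ C \ A, M.IsBase (insert f A \ {e}) ∧ M.IsBase (insert e C \ {f}) := by
  have heE : e ∈ M.E := hA.subset_ground he.1
  obtain ⟨f, ⟨hfD, hfK⟩, hfe⟩ :=
    ((hC.fundCircuit_isCircuit heE he.2).isCocircuit_inter_nontrivial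
      (M.fundCocircuit_isCocircuit he.1 hA)
      ⟨e, M.mem_fundCircuit e C, M.mem_fundCocircuit e A⟩).exists_ne e
  have hfC : f ∈ C := by simpa [hfe] using M.fundCircuit_subset_insert e C hfD
  have hfA : f ∉ A :=
    ((mem_insert_iff.1 (M.fundCocircuit_subset_insert_compl e A hfK)).resolve_left hfe).2
  refine ⟨f, ⟨hfC, hfA⟩, hA.exchange_isBase_of_indep' he.1 hfA ?_,
    hC.exchange_isBase_of_indep' hfC he.2 ?_⟩
  · rwa [hA.mem_fundCocircuit_iff_mem_fundCircuit,
      hA.indep.mem_fundCircuit_iff (by rw [hA.closure_eq]; exact hC.subset_ground hfC) hfA] at hfK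
  · rwa [hC.indep.mem_fundCircuit_iff (by rw [hC.closure_eq]; exact heE) he.2] at hfD

end Matroid

lemma wt_insert_sdiff {α : Type*} (ℓ : α → ℝ) {A : Set α} (hA : A.Finite) {x y : α}
    (hx : x ∈ A) (hy : y ∉ A) : wt ℓ (insert y A \ {x}) = wt ℓ A + ℓ y - ℓ x := by
  have hA' : wt ℓ A = ℓ x + wt ℓ (A \ {x}) := by
    rw [wt, wt, ← finsum_mem_insert ℓ (notMem_sdiff_of_mem (mem_singleton x)) hA.sdiff,
      insert_sdiff_singleton, insert_eq_of_mem hx]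
  have hyA : wt ℓ (insert y A \ {x}) = ℓ y + wt ℓ (A \ {x}) := by
    rw [← insert_sdiff_singleton_comm (ne_of_mem_of_not_mem hx hy).symm, wt, wt,
      finsum_mem_insert _ (fun h => hy h.1) hA.sdiff]
  linarith

section BrokenLineShelling

variable {α : Type*} [Finite α] {M : Matroid α} {n : ℕ} {B : Fin n → Set α}

section SingleWitness

variable {ℓ : α → ℝ} {i : Fin n}

lemma mem_restrictionSet_of_exchange (hB : EnumeratesBases M B)
    (hwit : ∀ j, wt ℓ (B j) < wt ℓ (B i) → j < i) {x y : α} (hx : x ∈ B i) (hy : y ∉ B i)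
    (hxy : M.IsBase (insert y (B i) \ {x})) (hlt : ℓ y < ℓ x) : x ∈ restrictionSet B i := by
  obtain ⟨k, hk⟩ := hB.2.2 _ hxy
  refine ⟨hx, k, hwit k ?_, ?_⟩
  · rw [hk, wt_insert_sdiff ℓ (toFinite _) hx hy]
    linarith
  · rw [hk]
    exact sdiff_subset_sdiff_left (subset_insert _ _)

lemma sdiff_subset_restrictionSet_of_forall_wt_lt (hB : EnumeratesBases M B)
    (hwit : ∀ j, wt ℓ (B j) < wt ℓ (B i) → j < i) {B₀ : Set α} (hB₀ : M.IsBase B₀)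
    (hmin : ∀ C, M.IsBase C → C ≠ B₀ → wt ℓ B₀ < wt ℓ C) :
    B i \ B₀ ⊆ restrictionSet B i := by
  intro x hx
  obtain ⟨f, hf, hfx, hxf⟩ := (hB.2.1 i).exists_symm_exchange hB₀ hx
  have hne : insert x B₀ \ {f} ≠ B₀ := fun h =>
    hx.2 (h ▸ ⟨mem_insert x B₀, (ne_of_mem_of_not_mem hf.1 hx.2).symm⟩)
  have hlt := hmin _ hxf hne
  rw [wt_insert_sdiff ℓ (toFinite _) hf.1 hx.2] at hlt
  exact mem_restrictionSet_of_exchange hB hwit hx.1 hf.2 hfx (by linarith)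

lemma exists_mem_restrictionSet_notMem (hB : EnumeratesBases M B) (hinj : Function.Injective ℓ)
    (hwit : ∀ j, wt ℓ (B j) < wt ℓ (B i) ↔ j < i) {G : Set α} (hGi : G ⊆ B i) {k : Fin n}
    (hki : k < i) (hGk : G ⊆ B k) : ∃ x ∈ restrictionSet B i, x ∉ G := by
  obtain ⟨C, ⟨hC, hGC⟩, hCmin⟩ := exists_min_image {C | M.IsBase C ∧ G ⊆ C} (wt ℓ) (toFinite _)
    ⟨B k, hB.2.1 k, hGk⟩
  have hCi : wt ℓ C < wt ℓ (B i) := (hCmin _ ⟨hB.2.1 k, hGk⟩).trans_lt ((hwit k).2 hki)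
  obtain ⟨e, heBi, heC⟩ : ∃ e ∈ B i, e ∉ C := not_subset.1 fun h =>
    hCi.ne (by rw [(hB.2.1 i).eq_of_subset_isBase hC h])
  obtain ⟨f, hf, hfe, hef⟩ := (hB.2.1 i).exists_symm_exchange hC ⟨heBi, heC⟩
  have hGef : G ⊆ insert e C \ {f} := fun y hy =>
    ⟨mem_insert_of_mem _ (hGC hy), fun h => hf.2 (h ▸ hGi hy)⟩
  have hle := hCmin _ ⟨hef, hGef⟩
  rw [wt_insert_sdiff ℓ (toFinite _) hf.1 heC] at hle
  have hfe' : ℓ f ≠ ℓ e := hinj.ne (ne_of_mem_of_not_mem hf.1 heC)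
  exact ⟨e, mem_restrictionSet_of_exchange hB (fun j => (hwit j).1) heBi hf.2 hfe
    (lt_of_le_of_ne (by linarith) hfe'), fun h => heC (hGC h)⟩

end SingleWitness

variable {ℓ : Fin n → α → ℝ}

lemma existsUnique_restrictionSet_subset_subset (hB : EnumeratesBases M B)
    (hinj : ∀ i, Function.Injective (ℓ i))
    (hwit : ∀ i j, wt (ℓ i) (B j) < wt (ℓ i) (B i) ↔ j < i) {G : Set α} (hG : ∃ i, G ⊆ B i) :
    ∃! i, restrictionSet B i ⊆ G ∧ G ⊆ B i := by
  obtain ⟨i, hGi, hmin⟩ := wellFounded_lt.has_min {i | G ⊆ B i} hG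
  refine ⟨i, ⟨fun x hx => ?_, hGi⟩, fun m ⟨hRm, hGm⟩ => ?_⟩
  · by_contra hxG
    obtain ⟨-, k, hki, hk⟩ := hx
    exact hmin k (fun y hy => hk ⟨hGi hy, fun h => hxG (h ▸ hy)⟩) hki
  · refine le_antisymm (not_lt.1 fun him => ?_) (not_lt.1 (hmin m hGm))
    obtain ⟨x, hx, hxG⟩ := exists_mem_restrictionSet_notMem hB (hinj m) (hwit m) hGm him hGi
    exact hxG (hRm hx)

lemma existsUnique_sdiff_eq_and_mem_Icc (hB : EnumeratesBases M B)
    (hinj : ∀ i, Function.Injective (ℓ i))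
    (hwit : ∀ i j, wt (ℓ i) (B j) < wt (ℓ i) (B i) ↔ j < i) {B₀ I T : Set α}
    (hpin : ∀ i, B i \ B₀ ⊆ restrictionSet B i) (hIB₀ : Disjoint I B₀)
    (hT : T ⊆ B₀) (hTI : M.Indep (T ∪ I)) :
    ∃! i, B i \ B₀ = I ∧ T ∈ Icc (restrictionSet B i ∩ B₀) (B i ∩ B₀) := by
  obtain ⟨C, hC, hTIC⟩ := hTI.exists_isBase_superset
  obtain ⟨i, rfl⟩ := hB.2.2 C hC
  refine (existsUnique_congr fun i => ?_).1
    (existsUnique_restrictionSet_subset_subset hB hinj hwit ⟨i, hTIC⟩)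
  exact subset_union_subset_iff_sdiff_eq_and_mem_Icc (fun x hx => hx.1) (hpin i) hT hIB₀

end BrokenLineShelling

theorem pinned_broken_line_h_vector_decomposition_general {α : Type*} [Fintype α]
    (M : Matroid α)
    (r : ℕ) (hr : ∀ C : Set α, M.IsBase C → C.ncard = r)
    {n : ℕ} (hn : 0 < n) (B : Fin n → Set α) (hB : EnumeratesBases M B)
    (ℓ : Fin n → α → ℝ) (hgen : ∀ i, Generic M (ℓ i))
    (hwit : ∀ i j : Fin n, wt (ℓ i) (B j) < wt (ℓ i) (B i) ↔ j < i)
    (hpin : ∀ i : Fin n, ∀ C : Set α, M.IsBase C → C ≠ B ⟨0, hn⟩ →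
      wt (ℓ i) (B ⟨0, hn⟩) < wt (ℓ i) C)
    (I : Set α) (hIB : I ∩ B ⟨0, hn⟩ = ∅) (j : ℕ) :
    ({i : Fin n | B i \ B ⟨0, hn⟩ = I ∧
        (restrictionSet B i).ncard = I.ncard + j}.ncard : ℤ)
      = hNumCR M I (B ⟨0, hn⟩) (r - I.ncard) j := by
  set B₀ := B ⟨0, hn⟩
  set 𝓕 : Set (Set α) := {T | T ⊆ B₀ ∧ M.Indep (T ∪ I)}
  have hpinR : ∀ i, B i \ B₀ ⊆ restrictionSet B i := fun i =>
    sdiff_subset_restrictionSet_of_forall_wt_lt hB (fun j => (hwit i j).1) (hB.2.1 _) (hpin i)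
  have hS : ∀ i, B i \ B₀ = I → (B i ∩ B₀).ncard = r - I.ncard := fun i hi => by
    have := ncard_inter_add_ncard_sdiff_eq_ncard (B i) B₀
    rw [hi, hr _ (hB.2.1 i)] at this
    omega
  have hIcc : ∀ i, B i \ B₀ = I → Icc (restrictionSet B i ∩ B₀) (B i ∩ B₀) ⊆ 𝓕 :=
    fun i hi T hT => ⟨hT.2.trans inter_subset_right, (hB.2.1 i).indep.subset
      (union_subset (hT.2.trans inter_subset_left) (hi ▸ sdiff_subset))⟩
  have hpart : ∀ T ∈ 𝓕, ∃! i, B i \ B₀ = I ∧ T ∈ Icc (restrictionSet B i ∩ B₀) (B i ∩ B₀) :=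
    fun T hT => existsUnique_sdiff_eq_and_mem_Icc hB (fun i => (hgen i).1) hwit hpinR
      (disjoint_iff_inter_eq_empty.2 hIB) hT.1 hT.2
  have hcount := hNumber_ncard_eq_ncard_of_partition_Icc (toFinite _)
    (fun i _ => inter_subset_inter_left _ fun x hx => hx.1) hS hIcc hpart j
  have hf : fNumCR M I B₀ = fun k => {T ∈ 𝓕 | T.ncard = k}.ncard :=
    funext fun k => by simp only [fNumCR, 𝓕, sep_ofPred, and_assoc]
  have hlhs : {i | B i \ B₀ = I ∧ (restrictionSet B i).ncard = I.ncard + j}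
      = {i | B i \ B₀ = I ∧ (restrictionSet B i ∩ B₀).ncard = j} :=
    ext fun i => and_congr_right fun hi => by
      rw [ncard_eq_ncard_sdiff_add_ncard_inter (toFinite _) (fun x hx => hx.1) (hpinR i), hi]
      omega
  rw [hlhs]
  exact hcount.symm.trans (congrArg (hNumber · (r - I.ncard) j) hf.symm)

theorem pinned_broken_line_h_vector_decomposition {α : Type*} [Fintype α]
    (M : Matroid α) (hE : M.E = Set.univ)
    (r : ℕ) (hr : ∀ C : Set α, M.IsBase C → C.ncard = r)
    {n : ℕ} (hn : 0 < n) (B : Fin n → Set α) (hB : EnumeratesBases M B)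
    (ℓ : Fin n → α → ℝ) (hgen : ∀ i, Generic M (ℓ i))
    (hwit : ∀ i j : Fin n, wt (ℓ i) (B j) < wt (ℓ i) (B i) ↔ j < i)
    (hpin : ∀ i : Fin n, ∀ C : Set α, M.IsBase C → C ≠ B ⟨0, hn⟩ →
      wt (ℓ i) (B ⟨0, hn⟩) < wt (ℓ i) C)
    (I : Set α) (hI : M.Indep I) (hIB : I ∩ B ⟨0, hn⟩ = ∅) (j : ℕ) :
    ({i : Fin n | B i \ B ⟨0, hn⟩ = I ∧
        (restrictionSet B i).ncard = I.ncard + j}.ncard : ℤ)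
      = hNumCR M I (B ⟨0, hn⟩) (r - I.ncard) j :=
  pinned_broken_line_h_vector_decomposition_general M r hr hn B hB ℓ hgen hwit hpin I hIB j
end

section
/- Let M be a matroid on a finite ground set E with a linear order < on E. If B and B' are bases of M with |IP_<(B)| < |IP_<(B')|, then there exist an element b ∈ IP_<(B') \ IP_<(B) and a basis B'' of M such that IP_<(B'') = IP_<(B) ∪ {b}. (Theorem 4.1.A (thm:Dawson-Chari A), after Dawson: the collection of internally passive sets has the greedoid exchange property.) -/
/-!
Process the ground set in increasing order and keep an element when it is not spanned by a
prescribed independent set `S` together with all smaller elements; this gives a basis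
`greedyBasis M S ⊇ S` whose internally passive elements all lie in `S`, since elements adjoined
greedily above `s` never help to span `s`.  Call `S` lower spanned
when each `s ∈ S` is spanned by `S \ {s}` and the elements below `s`.  For a lower spanned
independent `S` the passive set of `greedyBasis M S` is exactly `S`, and every passive set
`IP(B)` is lower spanned.  So it suffices to add to `A = IP(B)` an element `b ∈ IP(B')` outside
the span of `A` but spanned by `A` and the elements below `b`: the largest element of
`IP(B') \ cl(A)`, which is nonempty by augmentation, is such an element.
-/

/-- The internally passive set of a basis `B` with respect to a strict order `lt`. -/
def IP {α : Type*} (M : Matroid α) (lt : α → α → Prop) (B : Set α) : Set α :=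
  {b | b ∈ B ∧ ∃ b', b' ∉ B ∧ lt b' b ∧ M.IsBase (insert b' (B \ {b}))}

open Set

namespace Matroid

variable {α : Type*} {M : Matroid α} {S X G A B J : Set α} {s b : α}

lemma IP_subset (lt : α → α → Prop) : IP M lt B ⊆ B := fun _ h ↦ h.1

variable [LinearOrder α]

def greedyBasis (M : Matroid α) (S : Set α) : Set α :=
  S ∪ {e | e ∉ M.closure (S ∪ Iio e)}

def IsLowerSpanned (M : Matroid α) (S : Set α) : Prop :=
  ∀ s ∈ S, s ∈ M.closure (S \ {s} ∪ Iio s)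

lemma subset_greedyBasis (M : Matroid α) (S : Set α) : S ⊆ M.greedyBasis S := subset_union_left

lemma mem_closure_of_notMem_greedyBasis {e : α} (he : e ∉ M.greedyBasis S) :
    e ∈ M.closure (S ∪ Iio e) :=
  not_not.mp fun h ↦ he (Or.inr h)

lemma mem_IP_iff (hE : M.E = univ) (hB : M.IsBase B) (hsB : s ∈ B) :
    s ∈ IP M (· < ·) B ↔ s ∈ M.closure (B \ {s} ∪ Iio s) := by
  constructor
  · rintro ⟨-, e, -, hes, hbase⟩
    refine M.closure_subset_closure (insert_subset (Or.inr hes) subset_union_left) ?_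
    rw [hbase.closure_eq, hE]
    trivial
  · intro hs
    obtain ⟨e, hes, he⟩ : ∃ e < s, e ∉ M.closure (B \ {s}) := by
      by_contra! h
      refine hB.indep.notMem_closure_sdiff_of_mem hsB ?_
      exact M.closure_subset_closure_of_subset_closure
        (union_subset (M.subset_closure _ (by simp [hE])) fun e he ↦ h e he) hs
    have heB : e ∉ B := fun heB ↦ he (M.subset_closure _ (by simp [hE]) ⟨heB, hes.ne⟩)
    exact ⟨hsB, e, heB, hes, hB.exchange_base_of_notMem_closure hsB he (by simp [hE])⟩

lemma IsLowerSpanned.insert (hA : M.IsLowerSpanned A) (hb : b ∈ M.closure (A ∪ Iio b)) :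
    M.IsLowerSpanned (insert b A) := by
  by_cases hbA : b ∈ A
  · rwa [insert_eq_of_mem hbA]
  rintro x (rfl | hx)
  · rwa [insert_sdiff_self_of_notMem hbA]
  · exact M.closure_subset_closure
      (union_subset_union_left _ (sdiff_subset_sdiff_left (subset_insert _ _))) (hA x hx)

lemma IsLowerSpanned.exists_mem_closure_union_Iio (hJ : M.IsLowerSpanned J) (hJfin : J.Finite)
    (hJX : ¬ J ⊆ M.closure X) :
    ∃ b ∈ J, b ∉ M.closure X ∧ b ∈ M.closure (X ∪ Iio b) := by
  obtain ⟨b, ⟨hbJ, hbX⟩, hmax⟩ :=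
    exists_max_image (J \ M.closure X) id hJfin.sdiff (not_subset.mp hJX)
  refine ⟨b, hbJ, hbX, ?_⟩
  -- the elements of `J` above `b` are spanned by `X`, by the maximality of `b`
  have hsub : J \ {b} ∪ Iio b ⊆ M.closure X ∪ Iio b := by
    rintro y (⟨hyJ, hyb⟩ | hy)
    · by_contra hy
      simp only [mem_union, mem_Iio, not_or, not_lt] at hy
      exact hyb (le_antisymm (hmax y ⟨hyJ, hy.1⟩) hy.2)
    · exact Or.inr hy
  simpa using M.closure_mono hsub (hJ b hbJ)

section Finite

variable [Finite α]

lemma Indep.indep_greedyBasis (hE : M.E = univ) (hS : M.Indep S) :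
    M.Indep (M.greedyBasis S) := by
  classical
  set T := {e | e ∉ M.closure (S ∪ Iio e)}
  suffices ∀ F : Finset α, ↑F ⊆ T → M.Indep (S ∪ F) by
    have h := this (toFinite T).toFinset (by simp)
    rwa [Finite.coe_toFinset] at h
  intro F
  induction F using Finset.induction_on_max with
  | empty => simpa
  | insert a F hlt ih =>
    intro hF
    have ha : a ∉ M.closure (S ∪ F) := fun h ↦
      hF (by simp) (M.closure_subset_closure (union_subset_union_right _ hlt) h)
    rw [Finset.coe_insert, union_insert]
    exact (ih ((Finset.coe_subset.mpr (Finset.subset_insert _ _)).trans hF)).insert_indep_iff.mpr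
      (Or.inl ⟨by simp [hE], ha⟩)

lemma Indep.isBase_greedyBasis (hE : M.E = univ) (hS : M.Indep S) :
    M.IsBase (M.greedyBasis S) := by
  refine (hS.indep_greedyBasis hE).isBase_of_ground_subset_closure fun e _ ↦ ?_
  induction e using WellFoundedLT.induction with
  | _ e ih =>
  by_cases he : e ∈ M.greedyBasis S
  · exact M.subset_closure _ (by simp [hE]) he
  · refine M.closure_subset_closure_of_subset_closure ?_ (mem_closure_of_notMem_greedyBasis he)
    exact union_subset ((subset_greedyBasis M S).trans (M.subset_closure _ (by simp [hE])))
      fun z hz ↦ ih z hz (by simp [hE])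

lemma notMem_closure_union_of_forall_notMem_closure (hE : M.E = univ)
    (hs : s ∉ M.closure (X ∪ Iio s))
    (hG : ∀ g ∈ G, s < g ∧ g ∉ M.closure (insert s X ∪ Iio g)) :
    s ∉ M.closure (X ∪ Iio s ∪ G) := by
  obtain ⟨I, hI⟩ := M.exists_isBasis' (X ∪ Iio s)
  rw [← hI.closure_eq_closure] at hs
  have hsI : M.Indep (insert s I) :=
    hI.indep.insert_indep_iff.mpr (Or.inl ⟨by simp [hE], hs⟩)
  have hIs : I ⊆ M.greedyBasis (insert s I) \ {s} := fun x hx ↦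
    ⟨subset_greedyBasis _ _ (mem_insert_of_mem s hx),
      fun h ↦ hs (M.subset_closure _ (by simp [hE]) (h ▸ hx))⟩
  -- `G` is picked up by the greedy extension of `insert s I`
  have hGs : G ⊆ M.greedyBasis (insert s I) \ {s} := by
    intro g hg
    obtain ⟨hsg, hgX⟩ := hG g hg
    refine ⟨Or.inr fun h ↦ hgX (M.closure_subset_closure ?_ h), hsg.ne'⟩
    rintro x ((rfl | hxI) | hxg)
    · exact Or.inl (mem_insert x X)
    · rcases hI.subset hxI with hxX | hxs
      · exact Or.inl (mem_insert_of_mem s hxX)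
      · exact Or.inr (lt_trans hxs hsg)
    · exact Or.inr hxg
  have hspan : X ∪ Iio s ∪ G ⊆ M.closure (M.greedyBasis (insert s I) \ {s}) := by
    refine union_subset ?_ (hGs.trans (M.subset_closure _ (by simp [hE])))
    rw [← closure_subset_closure_iff_subset_closure (by simp [hE]), ← hI.closure_eq_closure]
    exact M.closure_mono hIs
  exact fun h ↦ (hsI.indep_greedyBasis hE).notMem_closure_sdiff_of_mem
    (subset_greedyBasis _ _ (mem_insert s I)) (M.closure_subset_closure_of_subset_closure hspan h)

lemma Indep.notMem_IP_greedyBasis (hE : M.E = univ) (hS : M.Indep S) {x : α}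
    (hx : x ∈ M.greedyBasis S) (hxS : x ∉ S) : x ∉ IP M (· < ·) (M.greedyBasis S) := by
  rw [mem_IP_iff hE (hS.isBase_greedyBasis hE) hx]
  have hsub :
      M.greedyBasis S \ {x} ∪ Iio x ⊆ S ∪ Iio x ∪ (M.greedyBasis S \ S) ∩ Ioi x := by
    rintro y (⟨hy, hyx⟩ | hyx)
    · by_cases hyS : y ∈ S
      · exact Or.inl (Or.inl hyS)
      rcases lt_or_gt_of_ne hyx with h | h
      · exact Or.inl (Or.inr h)
      · exact Or.inr ⟨⟨hy, hyS⟩, h⟩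
    · exact Or.inl (Or.inr hyx)
  refine fun h ↦ notMem_closure_union_of_forall_notMem_closure hE (hx.resolve_left hxS) ?_
    (M.closure_mono hsub h)
  rintro g ⟨⟨hg, hgS⟩, hxg⟩
  exact ⟨hxg, fun h ↦ hg.resolve_left hgS
    (M.closure_subset_closure
      (union_subset (insert_subset (Or.inr hxg) subset_union_left) subset_union_right) h)⟩

lemma Indep.IP_greedyBasis (hE : M.E = univ) (hS : M.Indep S) (hL : M.IsLowerSpanned S) :
    IP M (· < ·) (M.greedyBasis S) = S := by
  ext x
  refine ⟨fun hx ↦ not_not.mp fun hxS ↦ hS.notMem_IP_greedyBasis hE hx.1 hxS hx,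
    fun hxS ↦ ?_⟩
  rw [mem_IP_iff hE (hS.isBase_greedyBasis hE) (subset_greedyBasis _ _ hxS)]
  exact M.closure_mono
    (union_subset_union_left _ (sdiff_subset_sdiff_left (subset_greedyBasis _ _))) (hL x hxS)

lemma IsBase.isLowerSpanned_IP (hE : M.E = univ) (hB : M.IsBase B) :
    M.IsLowerSpanned (IP M (· < ·) B) := by
  intro a ha
  by_contra h
  refine notMem_closure_union_of_forall_notMem_closure hE h (G := (B \ IP M (· < ·) B) ∩ Ioi a)
    ?_ ?_
  · rintro g ⟨⟨hgB, hgP⟩, hag⟩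
    refine ⟨hag, fun hg ↦ hgP ((mem_IP_iff hE hB hgB).mpr (M.closure_mono ?_ hg))⟩
    refine union_subset_union_left _ (insert_subset ⟨ha.1, ?_⟩ ?_)
    · exact fun h ↦ hgP (h ▸ ha)
    · exact fun y hy ↦ ⟨hy.1.1, fun h ↦ hgP (h ▸ hy.1)⟩
  · refine M.closure_mono ?_ ((mem_IP_iff hE hB ha.1).mp ha)
    rintro y (⟨hyB, hya⟩ | hya)
    · by_cases hyP : y ∈ IP M (· < ·) B
      · exact Or.inl (Or.inl ⟨hyP, hya⟩)
      rcases lt_or_gt_of_ne hya with h | h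
      · exact Or.inl (Or.inr h)
      · exact Or.inr ⟨⟨hyB, hyP⟩, h⟩
    · exact Or.inl (Or.inr hya)

end Finite

end Matroid

open Matroid in
theorem IP_greedoid_exchange {α : Type*} [Fintype α] [LinearOrder α]
    (M : Matroid α) (hE : M.E = Set.univ)
    (B B' : Set α) (hB : M.IsBase B) (hB' : M.IsBase B')
    (hcard : (IP M (· < ·) B).ncard < (IP M (· < ·) B').ncard) :
    ∃ b ∈ IP M (· < ·) B' \ IP M (· < ·) B, ∃ B'' : Set α, M.IsBase B'' ∧
      IP M (· < ·) B'' = insert b (IP M (· < ·) B) := by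
  set A := IP M (· < ·) B
  have hA : M.Indep A := hB.indep.subset (IP_subset _)
  have hA'A : ¬ IP M (· < ·) B' ⊆ M.closure A := by
    obtain ⟨e, ⟨heA', heA⟩, he⟩ :=
      hA.exists_insert_of_encard_lt (hB'.indep.subset (IP_subset _))
      (by rw [← A.toFinite.cast_ncard_eq, ← (Set.toFinite _).cast_ncard_eq]
          exact_mod_cast hcard)
    exact fun h ↦ ((hA.insert_indep_iff_of_notMem heA).mp he).2 (h heA')
  obtain ⟨b, hbA', hbcl, hb⟩ :=
    (hB'.isLowerSpanned_IP hE).exists_mem_closure_union_Iio (Set.toFinite _) hA'A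
  have hbA : b ∉ A := fun h ↦ hbcl (M.subset_closure A (by simp [hE]) h)
  have hbind : M.Indep (insert b A) := hA.insert_indep_iff.mpr (Or.inl ⟨by simp [hE], hbcl⟩)
  exact ⟨b, ⟨hbA', hbA⟩, M.greedyBasis (insert b A), hbind.isBase_greedyBasis hE,
    hbind.IP_greedyBasis hE ((hB.isLowerSpanned_IP hE).insert hb)⟩
end
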